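/- arXiv:1604.06971 — 3 statements merged into one kernel-verified Lean document; each statement's English description precedes it below -/
import Mathlib

section
/- Let α, β ∈ (0,1) and let y = (y₀, y₁) with y₀, y₁ ∈ (0,1) and y₀ + y₁ = 1, and let K = K(y) = [−αβ(y₀ − y₁) + √((αβ(y₀ − y₁))² + 4αβ(1−α)(1−β)y₀y₁)] / (2α(1−β)y₀). Then: (i) for u ∈ (0,1) and w = (1−u)/u, one has y₀·log(u/((1−α)u + α(1−u))) + y₁·log((1−u)/(βu + (1−β)(1−u))) = −y₀·log(1−α+αw) − y₁·log(1−β+β/w); (ii) the function w ↦ −y₀·log(1−α+αw) − y₁·log(1−β+β/w) attains its supremum over w ∈ (0,∞) at the unique point w = K; consequently (iii) M*(y) := sup_{u ∈ (0,1)} [y₀·log(u/((1−α)u + α(1−u))) + y₁·log((1−u)/(βu + (1−β)(1−u)))] = −y₀·log(1−α+αK) − y₁·log(1−β+β/K). -/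
open Real

/-! In the variable `t = log w` the objective `-y₀ log(1-α+α eᵗ) - y₁ log(1-β+β e⁻ᵗ)` is strictly
concave, so it is maximized exactly at its critical point; the critical-point equation is the
quadratic `α(1-β)y₀ K² + αβ(y₀-y₁) K = (1-α)β y₁`, whose positive root is `K`. Concavity enters
through Jensen's inequality for `log`. The substitution `w = (1-u)/u` maps `(0,1)` onto `(0,∞)`
and turns the rate function into the objective, with `u = 1/(1+K)` the maximizer. -/

lemma pos_quadratic_root {a b c K : ℝ} (ha : 0 < a) (hc : 0 < c)
    (hK : K = (-b + √(b ^ 2 + 4 * a * c)) / (2 * a)) :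
    0 < K ∧ a * K ^ 2 + b * K = c := by
  subst hK
  set s := √(b ^ 2 + 4 * a * c)
  have hs : s ^ 2 = b ^ 2 + 4 * a * c := sq_sqrt (by positivity)
  have hb : b < s := lt_sqrt_of_sq_lt (by nlinarith [mul_pos ha hc])
  constructor
  · exact div_pos (by linarith) (by positivity)
  · field_simp
    linear_combination hs

/-- Jensen for `log` at the point `(a + b w)/(a + b K) = p (w/K) + (1 - p)` with weight
`p = bK/(a + bK)`. -/
lemma tangent_lt_log_add_mul_sub {a b w K : ℝ} (ha : 0 < a) (hb : 0 < b) (hw : 0 < w)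
    (hK : 0 < K) (hne : w ≠ K) :
    b * K / (a + b * K) * (log w - log K) < log (a + b * w) - log (a + b * K) := by
  have hPK : 0 < a + b * K := by positivity
  have hPw : 0 < a + b * w := by positivity
  set p := b * K / (a + b * K) with hp
  have hp0 : 0 < p := by positivity
  have hp1 : p < 1 := by rw [hp, div_lt_one hPK]; linarith
  have hwK : w / K ≠ 1 := fun h => hne ((div_eq_one_iff_eq hK.ne').mp h)
  have hjensen := strictConcaveOn_log_Ioi.2 (Set.mem_Ioi.mpr (div_pos hw hK))
    (Set.mem_Ioi.mpr one_pos) hwK hp0 (by linarith : 0 < 1 - p) (by ring)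
  have hcomb : p * (w / K) + (1 - p) * 1 = (a + b * w) / (a + b * K) := by
    rw [hp]; field_simp; ring
  simp only [smul_eq_mul, log_one, mul_zero, add_zero, hcomb] at hjensen
  rwa [log_div hPw.ne' hPK.ne', log_div hw.ne' hK.ne'] at hjensen

lemma log_div_affine_eq_neg_log {a b u v : ℝ} (hu : u ≠ 0) :
    log (u / (a * u + b * v)) = -log (a + b * (v / u)) := by
  rw [← log_inv]
  congr 1
  field_simp

lemma rate_eq_objective_of_mem_Ioo {α β y₀ y₁ u : ℝ} (hu0 : 0 < u) (hu1 : u < 1) :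
    y₀ * log (u / ((1 - α) * u + α * (1 - u)))
        + y₁ * log ((1 - u) / (β * u + (1 - β) * (1 - u)))
      = -(y₀ * log (1 - α + α * ((1 - u) / u))) - y₁ * log (1 - β + β / ((1 - u) / u)) := by
  rw [log_div_affine_eq_neg_log hu0.ne', add_comm (β * u),
    log_div_affine_eq_neg_log (sub_pos.mpr hu1).ne', div_div_eq_mul_div, mul_div_assoc]
  ring

lemma objective_lt_of_ne {α β y₀ y₁ K w : ℝ} (hα0 : 0 < α) (hα1 : α < 1) (hβ0 : 0 < β)
    (hβ1 : β < 1) (hy₀ : 0 < y₀) (hy₁ : 0 < y₁) (hK : 0 < K)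
    (hquad : α * (1 - β) * y₀ * K ^ 2 + α * β * (y₀ - y₁) * K = (1 - α) * β * y₁)
    (hw : 0 < w) (hne : w ≠ K) :
    -(y₀ * log (1 - α + α * w)) - y₁ * log (1 - β + β / w)
      < -(y₀ * log (1 - α + α * K)) - y₁ * log (1 - β + β / K) := by
  have hcrit : y₀ * (α * K / (1 - α + α * K)) = y₁ * (β / K / (1 - β + β / K)) := by
    have hPK : 0 < 1 - α + α * K := by nlinarith
    have hQK : 0 < (1 - β) * K + β := by nlinarith
    have e : β / K / (1 - β + β / K) = β / ((1 - β) * K + β) := by field_simp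
    rw [e, mul_div_assoc', mul_div_assoc', div_eq_div_iff hPK.ne' hQK.ne']
    linear_combination hquad
  have hα := tangent_lt_log_add_mul_sub (a := 1 - α) (by linarith) hα0 hw hK hne
  have hβ := tangent_lt_log_add_mul_sub (a := 1 - β) (by linarith) hβ0 (inv_pos.mpr hw)
    (inv_pos.mpr hK) (inv_injective.ne hne)
  simp only [log_inv, ← div_eq_mul_inv] at hβ
  have hcrit' : y₀ * (α * K / (1 - α + α * K)) * (log w - log K)
      = y₁ * (β / K / (1 - β + β / K)) * (log w - log K) := by rw [hcrit]
  linarith [mul_lt_mul_of_pos_left hα hy₀, mul_lt_mul_of_pos_left hβ hy₁]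

theorem stmt7_general
    (α β : ℝ) (hα0 : 0 < α) (hα1 : α < 1) (hβ0 : 0 < β) (hβ1 : β < 1)
    (y₀ y₁ : ℝ) (hy₀0 : 0 < y₀) (hy₁0 : 0 < y₁)
    (K : ℝ)
    (hK : K = (-(α * β * (y₀ - y₁)) +
        Real.sqrt ((α * β * (y₀ - y₁))^2 + 4 * α * β * (1 - α) * (1 - β) * y₀ * y₁))
      / (2 * α * (1 - β) * y₀))
    (f : ℝ → ℝ)
    (hf : ∀ u, f u = y₀ * Real.log (u / ((1 - α) * u + α * (1 - u)))
        + y₁ * Real.log ((1 - u) / (β * u + (1 - β) * (1 - u))))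
    (g : ℝ → ℝ)
    (hg : ∀ w, g w = -(y₀ * Real.log (1 - α + α * w)) - y₁ * Real.log (1 - β + β / w)) :
    -- (i) change of variables
    (∀ u : ℝ, 0 < u → u < 1 → f u = g ((1 - u) / u))
    -- (ii) unique maximizer of g on (0,∞)
    ∧ 0 < K
    ∧ (∀ w : ℝ, 0 < w → g w ≤ g K)
    ∧ (∀ w : ℝ, 0 < w → g w = g K → w = K)
    -- (iii) the value of the supremum
    ∧ sSup {r | ∃ u : ℝ, 0 < u ∧ u < 1 ∧ r = f u} = g K := by
  obtain ⟨hK0, hquad⟩ := pos_quadratic_root (b := α * β * (y₀ - y₁)) (K := K)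
    (mul_pos (mul_pos hα0 (sub_pos.mpr hβ1)) hy₀0) (mul_pos (mul_pos (sub_pos.mpr hα1) hβ0) hy₁0)
    (by rw [hK]; ring_nf)
  have hfg : ∀ u : ℝ, 0 < u → u < 1 → f u = g ((1 - u) / u) := fun u hu0 hu1 => by
    rw [hf, hg]; exact rate_eq_objective_of_mem_Ioo hu0 hu1
  have hlt : ∀ w : ℝ, 0 < w → w ≠ K → g w < g K := fun w hw hne => by
    rw [hg, hg]; exact objective_lt_of_ne hα0 hα1 hβ0 hβ1 hy₀0 hy₁0 hK0 hquad hw hne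
  have hle : ∀ w : ℝ, 0 < w → g w ≤ g K := fun w hw =>
    (eq_or_ne w K).elim (fun h => h ▸ le_rfl) fun hne => (hlt w hw hne).le
  refine ⟨hfg, hK0, hle, fun w hw heq => by_contra fun hne => (hlt w hw hne).ne heq, ?_⟩
  have hu0 : 0 < (1 + K)⁻¹ := by positivity
  have hu1 : (1 + K)⁻¹ < 1 := inv_lt_one_of_one_lt₀ (by linarith)
  refine IsGreatest.csSup_eq ⟨⟨(1 + K)⁻¹, hu0, hu1, ?_⟩, ?_⟩
  · rw [hfg _ hu0 hu1]
    congr 1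
    field_simp
    ring
  · rintro r ⟨u, hu0, hu1, rfl⟩
    rw [hfg u hu0 hu1]
    exact hle _ (div_pos (sub_pos.mpr hu1) hu0)

/-- Two-state rate function via the substitution `w = (1−u)/u`:
(i) the change of variables identity; (ii) the function
`g w = −y₀ log(1−α+αw) − y₁ log(1−β+β/w)` attains its supremum over `(0,∞)`
uniquely at `w = K`; consequently (iii)
`M*(y) = sup_{u ∈ (0,1)} [y₀ log(u/((1−α)u+α(1−u))) + y₁ log((1−u)/(βu+(1−β)(1−u)))]`
equals `−y₀ log(1−α+αK) − y₁ log(1−β+β/K)`. -/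
theorem stmt7
    (α β : ℝ) (hα0 : 0 < α) (hα1 : α < 1) (hβ0 : 0 < β) (hβ1 : β < 1)
    (y₀ y₁ : ℝ) (hy₀0 : 0 < y₀) (hy₀1 : y₀ < 1) (hy₁0 : 0 < y₁) (hy₁1 : y₁ < 1)
    (hsum : y₀ + y₁ = 1)
    (K : ℝ)
    (hK : K = (-(α * β * (y₀ - y₁)) +
        Real.sqrt ((α * β * (y₀ - y₁))^2 + 4 * α * β * (1 - α) * (1 - β) * y₀ * y₁))
      / (2 * α * (1 - β) * y₀))
    (f : ℝ → ℝ)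
    (hf : ∀ u, f u = y₀ * Real.log (u / ((1 - α) * u + α * (1 - u)))
        + y₁ * Real.log ((1 - u) / (β * u + (1 - β) * (1 - u))))
    (g : ℝ → ℝ)
    (hg : ∀ w, g w = -(y₀ * Real.log (1 - α + α * w)) - y₁ * Real.log (1 - β + β / w)) :
    -- (i) change of variables
    (∀ u : ℝ, 0 < u → u < 1 → f u = g ((1 - u) / u))
    -- (ii) unique maximizer of g on (0,∞)
    ∧ 0 < K
    ∧ (∀ w : ℝ, 0 < w → g w ≤ g K)
    ∧ (∀ w : ℝ, 0 < w → g w = g K → w = K)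
    -- (iii) the value of the supremum
    ∧ sSup {r | ∃ u : ℝ, 0 < u ∧ u < 1 ∧ r = f u} = g K :=
  stmt7_general α β hα0 hα1 hβ0 hβ1 y₀ y₁ hy₀0 hy₁0 K hK f hf g hg
end

section
/- Let α, β ∈ (0,1) and define, for a probability vector y = (y₀, y₁) on two states, M*(y) = sup over probability vectors u = (u₀, u₁) with strictly positive entries of [y₀·log(u₀/((1−α)u₀ + αu₁)) + y₁·log(u₁/(βu₀ + (1−β)u₁))]. Then M*(y) ≥ 0 for every probability vector y, and M*(y) = 0 if and only if y₀ = β/(α+β) and y₁ = α/(α+β), i.e. if and only if y is the equilibrium distribution π^st of the chain with transition matrix P^st = [[1−α, α],[β, 1−β]]. -/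
open Real

private lemma two_point_jensen_log (w a b : ℝ) (hw0 : 0 ≤ w) (hw1 : w ≤ 1)
    (ha : 0 < a) (hb : 0 < b) :
    (1 - w) * Real.log a + w * Real.log b ≤ Real.log ((1 - w) * a + w * b) := by
  set c := (1 - w) * a + w * b with hc
  have hm : 0 < min a b := lt_min ha hb
  have hcpos : 0 < c := by
    have p1 : 0 ≤ (1 - w) * (a - min a b) :=
      mul_nonneg (by linarith) (by simp [min_le_left])
    have p2 : 0 ≤ w * (b - min a b) :=
      mul_nonneg hw0 (by simp [min_le_right])
    have : min a b ≤ c := by rw [hc]; nlinarith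
    linarith
  have h1 : Real.log (a / c) ≤ a / c - 1 := Real.log_le_sub_one_of_pos (div_pos ha hcpos)
  have h2 : Real.log (b / c) ≤ b / c - 1 := Real.log_le_sub_one_of_pos (div_pos hb hcpos)
  rw [Real.log_div ha.ne' hcpos.ne'] at h1
  rw [Real.log_div hb.ne' hcpos.ne'] at h2
  have h3 : (1 - w) * (Real.log a - Real.log c) ≤ (1 - w) * (a / c - 1) :=
    mul_le_mul_of_nonneg_left h1 (by linarith)
  have h4 : w * (Real.log b - Real.log c) ≤ w * (b / c - 1) :=
    mul_le_mul_of_nonneg_left h2 hw0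
  have h5 : (1 - w) * (a / c - 1) + w * (b / c - 1) = 0 := by
    field_simp
    linarith [hc]
  linarith

/-- The two-state rate function `M*` is nonnegative on the simplex,
and vanishes exactly at the equilibrium distribution
`π^st = (β/(α+β), α/(α+β))` of the chain with transition matrix
`[[1−α, α],[β, 1−β]]`. -/
theorem stmt9
    (α β : ℝ) (hα0 : 0 < α) (hα1 : α < 1) (hβ0 : 0 < β) (hβ1 : β < 1)
    (Mstar : ℝ → ℝ → ℝ)
    (hM : ∀ y₀ y₁, Mstar y₀ y₁ = sSup {r | ∃ u₀ u₁ : ℝ, 0 < u₀ ∧ 0 < u₁ ∧ u₀ + u₁ = 1 ∧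
        r = y₀ * Real.log (u₀ / ((1 - α) * u₀ + α * u₁))
          + y₁ * Real.log (u₁ / (β * u₀ + (1 - β) * u₁))}) :
    ∀ y₀ y₁ : ℝ, 0 ≤ y₀ → 0 ≤ y₁ → y₀ + y₁ = 1 →
      0 ≤ Mstar y₀ y₁ ∧
      (Mstar y₀ y₁ = 0 ↔ (y₀ = β / (α + β) ∧ y₁ = α / (α + β))) := by
  intro y₀ y₁ hy₀ hy₁ hsum
  have h1α : (0:ℝ) < 1 - α := by linarith
  have h1β : (0:ℝ) < 1 - β := by linarith
  have hab : (0:ℝ) < α + β := by linarith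
  obtain ⟨S, hSdef⟩ : ∃ S : Set ℝ, S = {r | ∃ u₀ u₁ : ℝ, 0 < u₀ ∧ 0 < u₁ ∧ u₀ + u₁ = 1 ∧
      r = y₀ * Real.log (u₀ / ((1 - α) * u₀ + α * u₁))
        + y₁ * Real.log (u₁ / (β * u₀ + (1 - β) * u₁))} := ⟨_, rfl⟩
  have hMS : Mstar y₀ y₁ = sSup S := by rw [hM y₀ y₁, hSdef]
  have hmemS : ∀ r : ℝ, (∃ u₀ u₁ : ℝ, 0 < u₀ ∧ 0 < u₁ ∧ u₀ + u₁ = 1 ∧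
      r = y₀ * Real.log (u₀ / ((1 - α) * u₀ + α * u₁))
        + y₁ * Real.log (u₁ / (β * u₀ + (1 - β) * u₁))) → r ∈ S := by
    intro r hr; rw [hSdef]; exact hr
  -- 0 is in S
  have h0S : (0:ℝ) ∈ S := by
    refine hmemS 0 ⟨1/2, 1/2, by norm_num, by norm_num, by norm_num, ?_⟩
    have e1 : (1 - α) * (1/2 : ℝ) + α * (1/2) = 1/2 := by ring
    have e2 : β * (1/2 : ℝ) + (1 - β) * (1/2) = 1/2 := by ring
    rw [e1, e2]
    norm_num
  -- S is bounded above
  have hbdd : BddAbove S := by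
    refine ⟨y₀ / (1 - α) + y₁ / (1 - β), ?_⟩
    rw [hSdef]
    rintro r ⟨u₀, u₁, hu₀, hu₁, hu, rfl⟩
    have hc₀ : 0 < (1 - α) * u₀ + α * u₁ := by positivity
    have hc₁ : 0 < β * u₀ + (1 - β) * u₁ := by positivity
    have l0 : Real.log (u₀ / ((1 - α) * u₀ + α * u₁)) ≤ 1 / (1 - α) := by
      have := Real.log_le_sub_one_of_pos (div_pos hu₀ hc₀)
      have hd : u₀ / ((1 - α) * u₀ + α * u₁) ≤ 1 / (1 - α) := by
        rw [div_le_div_iff₀ hc₀ h1α]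
        nlinarith [mul_pos hα0 hu₁]
      linarith
    have l1 : Real.log (u₁ / (β * u₀ + (1 - β) * u₁)) ≤ 1 / (1 - β) := by
      have := Real.log_le_sub_one_of_pos (div_pos hu₁ hc₁)
      have hd : u₁ / (β * u₀ + (1 - β) * u₁) ≤ 1 / (1 - β) := by
        rw [div_le_div_iff₀ hc₁ h1β]
        nlinarith [mul_pos hβ0 hu₀]
      linarith
    have := mul_le_mul_of_nonneg_left l0 hy₀
    have := mul_le_mul_of_nonneg_left l1 hy₁
    have e0 : y₀ * (1 / (1 - α)) = y₀ / (1 - α) := by ring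
    have e1 : y₁ * (1 / (1 - β)) = y₁ / (1 - β) := by ring
    linarith
  have hge : 0 ≤ sSup S := le_csSup hbdd h0S
  refine ⟨hMS ▸ hge, ?_⟩
  constructor
  · -- Mstar = 0 → equilibrium
    intro hz
    rw [hMS] at hz
    have key : α * y₀ = β * y₁ := by
      by_contra hne
      have hma : 0 ≤ α * y₀ := mul_nonneg hα0.le hy₀
      have hmb : 0 ≤ β * y₁ := mul_nonneg hβ0.le hy₁
      obtain ⟨D, hDdef⟩ : ∃ D : ℝ, D = α * y₀ + β * y₁ := ⟨_, rfl⟩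
      have hD : 0 < D := by
        rcases lt_or_eq_of_le hma with h | h
        · linarith
        · rcases lt_or_eq_of_le hmb with h' | h'
          · linarith
          · exact absurd (h.symm.trans h') (by exact hne)
      obtain ⟨ε, hεdef⟩ : ∃ e : ℝ, e = (α * y₀ - β * y₁) / (4 * D) := ⟨_, rfl⟩
      have h4D : (0:ℝ) < 4 * D := by linarith
      have hεeq : ε * (4 * D) = α * y₀ - β * y₁ := by
        rw [hεdef]; field_simp
      have hεne : ε ≠ 0 := by
        intro h
        rw [h, zero_mul] at hεeq
        exact hne (by linarith)
      have hεle : ε ≤ 1/4 := by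
        rw [hεdef, div_le_iff₀ h4D]; linarith
      have hεge : -(1/4) ≤ ε := by
        rw [hεdef, le_div_iff₀ h4D]; linarith
      obtain ⟨u₀, hu₀def⟩ : ∃ u : ℝ, u = 1/2 + ε := ⟨_, rfl⟩
      obtain ⟨u₁, hu₁def⟩ : ∃ u : ℝ, u = 1/2 - ε := ⟨_, rfl⟩
      have hu₀ : 0 < u₀ := by rw [hu₀def]; linarith
      have hu₁ : 0 < u₁ := by rw [hu₁def]; linarith
      have hc₀ : 0 < (1 - α) * u₀ + α * u₁ := by positivity
      have hc₁ : 0 < β * u₀ + (1 - β) * u₁ := by positivity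
      obtain ⟨r, hrdef⟩ : ∃ r : ℝ, r = y₀ * Real.log (u₀ / ((1 - α) * u₀ + α * u₁))
          + y₁ * Real.log (u₁ / (β * u₀ + (1 - β) * u₁)) := ⟨_, rfl⟩
      have hrS : r ∈ S := hmemS r ⟨u₀, u₁, hu₀, hu₁, by rw [hu₀def, hu₁def]; ring, hrdef⟩
      -- lower bound for the logs
      have lb₀ : 1 - ((1 - α) * u₀ + α * u₁) / u₀ ≤ Real.log (u₀ / ((1 - α) * u₀ + α * u₁)) := by
        have h := Real.log_le_sub_one_of_pos (div_pos hc₀ hu₀)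
        rw [Real.log_div hc₀.ne' hu₀.ne'] at h
        rw [Real.log_div hu₀.ne' hc₀.ne']
        linarith
      have lb₁ : 1 - (β * u₀ + (1 - β) * u₁) / u₁ ≤ Real.log (u₁ / (β * u₀ + (1 - β) * u₁)) := by
        have h := Real.log_le_sub_one_of_pos (div_pos hc₁ hu₁)
        rw [Real.log_div hc₁.ne' hu₁.ne'] at h
        rw [Real.log_div hu₁.ne' hc₁.ne']
        linarith
      have hr_ge : y₀ * (1 - ((1 - α) * u₀ + α * u₁) / u₀)
          + y₁ * (1 - (β * u₀ + (1 - β) * u₁) / u₁) ≤ r := by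
        have := mul_le_mul_of_nonneg_left lb₀ hy₀
        have := mul_le_mul_of_nonneg_left lb₁ hy₁
        rw [hrdef]; linarith
      have hc0e : (1 - α) * u₀ + α * u₁ = u₀ - 2 * α * ε := by
        rw [hu₀def, hu₁def]; ring
      have hc1e : β * u₀ + (1 - β) * u₁ = u₁ + 2 * β * ε := by
        rw [hu₀def, hu₁def]; ring
      have A0 : 1 - ((1 - α) * u₀ + α * u₁) / u₀ = 2 * α * ε / u₀ := by
        rw [hc0e, sub_div, div_self hu₀.ne']; ring
      have A1 : 1 - (β * u₀ + (1 - β) * u₁) / u₁ = -(2 * β * ε) / u₁ := by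
        rw [hc1e, add_div, div_self hu₁.ne']; ring
      have hfrac : y₀ * (2 * α * ε / u₀) + y₁ * (-(2 * β * ε) / u₁)
          = (2 * α * ε * y₀ * u₁ - 2 * β * ε * y₁ * u₀) / (u₀ * u₁) := by
        field_simp
        ring
      have hnum : 2 * α * ε * y₀ * u₁ - 2 * β * ε * y₁ * u₀ = 2 * ε^2 * D := by
        rw [hu₀def, hu₁def]
        linear_combination (-ε) * hεeq + 2 * ε^2 * hDdef
      have hident : y₀ * (1 - ((1 - α) * u₀ + α * u₁) / u₀)
          + y₁ * (1 - (β * u₀ + (1 - β) * u₁) / u₁) = 2 * ε^2 * D / (u₀ * u₁) := by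
        rw [A0, A1, hfrac, hnum]
      have hε2 : 0 < ε^2 := lt_of_le_of_ne (sq_nonneg ε) (Ne.symm (pow_ne_zero 2 hεne))
      have hrpos : 0 < r := by
        have hq : 0 < 2 * ε^2 * D / (u₀ * u₁) :=
          div_pos (mul_pos (mul_pos two_pos hε2) hD) (mul_pos hu₀ hu₁)
        rw [hident] at hr_ge
        linarith
      have := le_csSup hbdd hrS
      rw [hz] at this
      linarith
    constructor
    · rw [eq_div_iff hab.ne']
      linear_combination key + β * hsum
    · rw [eq_div_iff hab.ne']
      linear_combination -key + α * hsum
  · -- equilibrium → Mstar = 0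
    rintro ⟨hy0e, hy1e⟩
    rw [hMS]
    refine le_antisymm (csSup_le ⟨0, h0S⟩ ?_) hge
    rw [hSdef]
    rintro r ⟨u₀, u₁, hu₀, hu₁, hu, rfl⟩
    have hc₀ : 0 < (1 - α) * u₀ + α * u₁ := by positivity
    have hc₁ : 0 < β * u₀ + (1 - β) * u₁ := by positivity
    have j0 : (1 - α) * Real.log u₀ + α * Real.log u₁ ≤ Real.log ((1 - α) * u₀ + α * u₁) :=
      two_point_jensen_log α u₀ u₁ hα0.le hα1.le hu₀ hu₁
    have j1 : (1 - β) * Real.log u₁ + β * Real.log u₀ ≤ Real.log (β * u₀ + (1 - β) * u₁) := by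
      have := two_point_jensen_log β u₁ u₀ hβ0.le hβ1.le hu₁ hu₀
      rw [show (1 - β) * u₁ + β * u₀ = β * u₀ + (1 - β) * u₁ from by ring] at this
      exact this
    rw [Real.log_div hu₀.ne' hc₀.ne', Real.log_div hu₁.ne' hc₁.ne']
    have e : y₀ * α = y₁ * β := by rw [hy0e, hy1e]; ring
    have h₀ : y₀ * (Real.log u₀ - Real.log ((1 - α) * u₀ + α * u₁))
        ≤ y₀ * (α * (Real.log u₀ - Real.log u₁)) :=
      mul_le_mul_of_nonneg_left (by linarith) hy₀
    have h₁ : y₁ * (Real.log u₁ - Real.log (β * u₀ + (1 - β) * u₁))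
        ≤ y₁ * (β * (Real.log u₁ - Real.log u₀)) :=
      mul_le_mul_of_nonneg_left (by linarith) hy₁
    have e2 : y₀ * (α * (Real.log u₀ - Real.log u₁)) + y₁ * (β * (Real.log u₁ - Real.log u₀)) = 0 := by
      linear_combination (Real.log u₀ - Real.log u₁) * e
    linarith
end

section
/- Let P = (p_{ij}) be an ℓ×ℓ stochastic matrix with all entries strictly positive, and let π be its unique stationary distribution (πP = π). Define, for y ∈ S_ℓ, M*(y) = sup over probability vectors u ∈ S_ℓ with all entries strictly positive of Σ_j y_j·log(u_j/(Pu)_j), where (Pu)_j = Σ_l p_{jl} u_l. Then M*(y) ≥ 0 for every y ∈ S_ℓ, M*(π) = 0, and M*(y) > 0 for every y ∈ S_ℓ with y ≠ π. -/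
/-!
Write `F(y, u) = ∑ⱼ yⱼ log (uⱼ / (Pu)ⱼ)`. A constant `u` gives `F = 0`, so `M* ≥ 0`, and
`(Pu)ⱼ ≥ pⱼⱼ uⱼ` bounds `F(y, ·)` above, so the supremum is finite. For `y = π`, Jensen's
inequality for the concave `log` gives `log (Pu)ⱼ ≥ ∑ₗ pⱼₗ log uₗ`, and stationarity turns
`∑ⱼ πⱼ ∑ₗ pⱼₗ log uₗ` back into `∑ₗ πₗ log uₗ`, so `F(π, ·) ≤ 0`. If `M*(y) = 0`, then
`F(y, ·)`, being invariant under scaling of `u`, has a local maximum at `u = 1`; its derivative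
there in the direction `g` is `⟨y, g - Pg⟩ = ⟨y - yP, g⟩`, and `g = y - yP` forces `yP = y`.
A positive stochastic matrix has only one stationary distribution, so `y = π`.
-/

open Real Finset Filter Topology

namespace StochasticMatrix

variable {ι : Type*} [Fintype ι] {P : ι → ι → ℝ}

theorem abs_sum_lt_sum_abs_of_pos_of_neg (a : ι → ℝ) {i j : ι} (hi : 0 < a i) (hj : a j < 0) :
    |∑ k, a k| < ∑ k, |a k| := by
  refine abs_lt.mpr ⟨?_, ?_⟩
  · have : ∑ k, -a k < ∑ k, |a k| :=
      sum_lt_sum (fun k _ => neg_le_abs _) ⟨i, mem_univ _, by rw [abs_of_pos hi]; linarith⟩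
    rw [sum_neg_distrib] at this
    linarith
  · exact sum_lt_sum (fun k _ => le_abs_self _) ⟨j, mem_univ _, hj.trans_le (abs_nonneg _)⟩

theorem eq_zero_of_vecMul_eq_self (hP : ∀ i j, 0 < P i j) (hProw : ∀ i, ∑ j, P i j = 1)
    {d : ι → ℝ} (hd : ∀ j, ∑ i, d i * P i j = d j) (hsum : ∑ i, d i = 0) : d = 0 := by
  by_contra hne
  -- `d` has entries of both signs, so `|dP| < |d| P` in every coordinate, while `P` preserves mass.
  obtain ⟨k, hk⟩ : ∃ k, d k ≠ 0 := by simpa [funext_iff] using hne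
  obtain ⟨a, -, ha⟩ := exists_pos_of_sum_zero_of_exists_nonzero d hsum ⟨k, mem_univ _, hk⟩
  obtain ⟨b, -, hb⟩ := exists_pos_of_sum_zero_of_exists_nonzero (-d)
    (by simp [sum_neg_distrib, hsum]) ⟨k, mem_univ _, by simpa using hk⟩
  replace hb : d b < 0 := by simpa using hb
  have hcol : ∀ j, |d j| < ∑ i, |d i| * P i j := fun j => by
    have := abs_sum_lt_sum_abs_of_pos_of_neg (fun i => d i * P i j)
      (mul_pos ha (hP a j)) (mul_neg_of_neg_of_pos hb (hP b j))
    simpa only [hd j, abs_mul, abs_of_pos (hP _ j)] using this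
  have : ∑ j, |d j| < ∑ i, |d i| := calc
    ∑ j, |d j| < ∑ j, ∑ i, |d i| * P i j :=
      sum_lt_sum (fun j _ => (hcol j).le) ⟨k, mem_univ _, hcol k⟩
    _ = ∑ i, |d i| := by
      rw [sum_comm]
      simp only [← mul_sum, hProw, mul_one]
  exact this.false

theorem eq_of_vecMul_eq_self (hP : ∀ i j, 0 < P i j) (hProw : ∀ i, ∑ j, P i j = 1)
    {x y : ι → ℝ} (hx : ∀ j, ∑ i, x i * P i j = x j) (hy : ∀ j, ∑ i, y i * P i j = y j)
    (hsum : ∑ i, x i = ∑ i, y i) : x = y := by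
  have := eq_zero_of_vecMul_eq_self hP hProw (d := x - y)
    (fun j => by simp only [Pi.sub_apply, sub_mul, sum_sub_distrib, hx, hy])
    (by simp only [Pi.sub_apply, sum_sub_distrib, hsum, sub_self])
  exact sub_eq_zero.mp this

noncomputable def logRatioSum (P : ι → ι → ℝ) (y u : ι → ℝ) : ℝ :=
  ∑ j, y j * log (u j / ∑ l, P j l * u l)

def logRatioValues (P : ι → ι → ℝ) (y : ι → ℝ) : Set ℝ :=
  {r | ∃ u : ι → ℝ, (∀ j, 0 < u j) ∧ (∑ j, u j = 1) ∧ r = logRatioSum P y u}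

theorem logRatioSum_const_mul (y u : ι → ℝ) {c : ℝ} (hc : c ≠ 0) :
    logRatioSum P y (fun j => c * u j) = logRatioSum P y u := by
  simp only [logRatioSum, mul_left_comm _ c, ← mul_sum, mul_div_mul_left _ _ hc]

theorem logRatioSum_const (hProw : ∀ i, ∑ j, P i j = 1) (y : ι → ℝ) {c : ℝ} (hc : c ≠ 0) :
    logRatioSum P y (fun _ => c) = 0 := by
  simp [logRatioSum, ← sum_mul, hProw, hc]

theorem logRatioSum_le_sum_neg_log_diag (hP : ∀ i j, 0 ≤ P i j) (hPdiag : ∀ j, 0 < P j j)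
    {y u : ι → ℝ} (hy : ∀ j, 0 ≤ y j) (hu : ∀ j, 0 < u j) :
    logRatioSum P y u ≤ ∑ j, y j * -log (P j j) := by
  refine sum_le_sum fun j _ => mul_le_mul_of_nonneg_left ?_ (hy j)
  have hdiag : P j j * u j ≤ ∑ l, P j l * u l :=
    single_le_sum (f := fun l => P j l * u l) (fun l _ => mul_nonneg (hP j l) (hu l).le)
      (mem_univ j)
  have hPu : 0 < P j j * u j := mul_pos (hPdiag j) (hu j)
  rw [← log_inv]
  refine log_le_log (div_pos (hu j) (hPu.trans_le hdiag)) ?_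
  calc u j / ∑ l, P j l * u l ≤ u j / (P j j * u j) :=
        div_le_div_of_nonneg_left (hu j).le hPu hdiag
    _ = (P j j)⁻¹ := by field_simp [(hu j).ne']

theorem bddAbove_logRatioValues (hP : ∀ i j, 0 ≤ P i j) (hPdiag : ∀ j, 0 < P j j) {y : ι → ℝ}
    (hy : ∀ j, 0 ≤ y j) : BddAbove (logRatioValues P y) := by
  refine ⟨∑ j, y j * -log (P j j), ?_⟩
  rintro _ ⟨u, hu, -, rfl⟩
  exact logRatioSum_le_sum_neg_log_diag hP hPdiag hy hu

theorem zero_mem_logRatioValues [Nonempty ι] (hProw : ∀ i, ∑ j, P i j = 1) (y : ι → ℝ) :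
    (0 : ℝ) ∈ logRatioValues P y := by
  have hcard : (0 : ℝ) < Fintype.card ι := by exact_mod_cast Fintype.card_pos
  refine ⟨fun _ => (Fintype.card ι : ℝ)⁻¹, fun _ => by positivity, ?_,
    (logRatioSum_const hProw y (by positivity)).symm⟩
  simp [hcard.ne']

theorem logRatioSum_le_sSup [Nonempty ι] {y u : ι → ℝ} (hbdd : BddAbove (logRatioValues P y))
    (hu : ∀ j, 0 < u j) : logRatioSum P y u ≤ sSup (logRatioValues P y) := by
  have hsum : 0 < ∑ j, u j := sum_pos (fun j _ => hu j) univ_nonempty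
  refine le_csSup hbdd
    ⟨fun j => (∑ l, u l)⁻¹ * u j, fun j => mul_pos (inv_pos.mpr hsum) (hu j), ?_, ?_⟩
  · rw [← mul_sum, inv_mul_cancel₀ hsum.ne']
  · rw [logRatioSum_const_mul y u (inv_ne_zero hsum.ne')]

theorem logRatioSum_nonpos_of_vecMul_eq_self (hP : ∀ i j, 0 ≤ P i j)
    (hProw : ∀ i, ∑ j, P i j = 1) {p u : ι → ℝ} (hp : ∀ j, 0 ≤ p j)
    (hpP : ∀ j, ∑ i, p i * P i j = p j) (hu : ∀ j, 0 < u j) :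
    logRatioSum P p u ≤ 0 := by
  have hjensen : ∀ j, ∑ l, P j l * log (u l) ≤ log (∑ l, P j l * u l) := fun j =>
    strictConcaveOn_log_Ioi.concaveOn.le_map_sum (fun l _ => hP j l) (hProw j) (fun l _ => hu l)
  have hPu : ∀ j, 0 < ∑ l, P j l * u l := fun j => by
    have : ∑ _l : ι, (0 : ℝ) < ∑ l, P j l := by simp [hProw j]
    obtain ⟨l, -, hl⟩ := exists_lt_of_sum_lt this
    exact sum_pos' (fun l _ => mul_nonneg (hP j l) (hu l).le) ⟨l, mem_univ _, mul_pos hl (hu l)⟩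
  calc logRatioSum P p u = ∑ j, p j * (log (u j) - log (∑ l, P j l * u l)) := by
        simp only [logRatioSum, log_div (hu _).ne' (hPu _).ne']
    _ ≤ ∑ j, p j * (log (u j) - ∑ l, P j l * log (u l)) :=
        sum_le_sum fun j _ => mul_le_mul_of_nonneg_left (by linarith [hjensen j]) (hp j)
    _ = ∑ j, p j * log (u j) - ∑ l, (∑ j, p j * P j l) * log (u l) := by
        simp only [mul_sub, sum_sub_distrib, mul_sum, sum_mul, mul_assoc]
        rw [sum_comm (f := fun j l => p j * (P j l * log (u l)))]
    _ = 0 := by simp only [hpP, sub_self]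

theorem hasDerivAt_logRatioSum_one_add_mul (hProw : ∀ i, ∑ j, P i j = 1) (y g : ι → ℝ) :
    HasDerivAt (fun t : ℝ => logRatioSum P y (fun j => 1 + t * g j))
      (∑ j, y j * (g j - ∑ l, P j l * g l)) 0 := by
  refine HasDerivAt.fun_sum fun j _ => HasDerivAt.const_mul (y j) ?_
  have hnum : HasDerivAt (fun t : ℝ => 1 + t * g j) (g j) 0 := by
    simpa using ((hasDerivAt_id (0 : ℝ)).mul_const (g j)).const_add 1
  have hden : HasDerivAt (fun t : ℝ => ∑ l, P j l * (1 + t * g l)) (∑ l, P j l * g l) 0 := by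
    refine HasDerivAt.fun_sum fun l _ => ?_
    simpa using (((hasDerivAt_id (0 : ℝ)).mul_const (g l)).const_add 1).const_mul (P j l)
  exact ((hnum.fun_div hden (by simp [hProw j])).log (by simp [hProw j])).congr_deriv
    (by simp [hProw j])

theorem sum_mul_sub_eq_zero_of_logRatioSum_nonpos (hProw : ∀ i, ∑ j, P i j = 1) {y : ι → ℝ}
    (hy : ∀ u : ι → ℝ, (∀ j, 0 < u j) → logRatioSum P y u ≤ 0) (g : ι → ℝ) :
    ∑ j, y j * (g j - ∑ l, P j l * g l) = 0 := by
  refine IsLocalMax.hasDerivAt_eq_zero ?_ (hasDerivAt_logRatioSum_one_add_mul hProw y g)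
  have hpos : ∀ᶠ t in 𝓝 (0 : ℝ), ∀ j, 0 < 1 + t * g j := eventually_all.mpr fun j =>
    ((continuous_const.add (continuous_id.mul continuous_const)).tendsto 0).eventually
      (lt_mem_nhds (by simp))
  filter_upwards [hpos] with t ht
  simpa [logRatioSum_const hProw y one_ne_zero] using hy _ ht

theorem vecMul_eq_self_of_logRatioSum_nonpos (hProw : ∀ i, ∑ j, P i j = 1) {y : ι → ℝ}
    (hy : ∀ u : ι → ℝ, (∀ j, 0 < u j) → logRatioSum P y u ≤ 0) (j : ι) :
    ∑ i, y i * P i j = y j := by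
  set g : ι → ℝ := fun l => y l - ∑ i, y i * P i l with hg
  have hfirst : ∑ j, y j * (g j - ∑ l, P j l * g l) = ∑ l, g l ^ 2 := calc
    _ = ∑ l, (y l - ∑ i, y i * P i l) * g l := by
      simp only [mul_sub, sub_mul, sum_sub_distrib, mul_sum, sum_mul, mul_assoc]
      rw [sum_comm (f := fun i l => y i * (P i l * g l))]
    _ = ∑ l, g l ^ 2 := by simp only [hg, sq]
  have hzero := (sum_mul_sub_eq_zero_of_logRatioSum_nonpos hProw hy g).symm.trans hfirst
  have hgj : g j = 0 := pow_eq_zero_iff two_ne_zero |>.mp <|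
    (sum_eq_zero_iff_of_nonneg fun l _ => sq_nonneg (g l)).mp hzero.symm j (mem_univ j)
  exact (sub_eq_zero.mp hgj).symm

end StochasticMatrix

open StochasticMatrix

/-- For an `ℓ×ℓ` stochastic matrix `P` with strictly positive
entries and (unique) stationary distribution `pi` (`piP = pi`), the rate function
`M*(y) = sup_{u > 0, Σu = 1} Σ_j y_j log(u_j/(Pu)_j)` is nonnegative on the
simplex, vanishes at `pi`, and is strictly positive at every other point of the
simplex. -/
theorem stmt10
    (ℓ : ℕ) (hℓ : 0 < ℓ)
    (P : Fin ℓ → Fin ℓ → ℝ)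
    (hPpos : ∀ i j, 0 < P i j)
    (hProw : ∀ i, ∑ j, P i j = 1)
    (pi : Fin ℓ → ℝ)
    (hpiPos : ∀ i, 0 ≤ pi i)
    (hpiSum : ∑ i, pi i = 1)
    (hpiStat : ∀ j, ∑ i, pi i * P i j = pi j)
    (Mstar : (Fin ℓ → ℝ) → ℝ)
    (hM : ∀ y, Mstar y = sSup {r | ∃ u : Fin ℓ → ℝ, (∀ j, 0 < u j) ∧ (∑ j, u j = 1) ∧
        r = ∑ j, y j * Real.log (u j / ∑ l, P j l * u l)}) :
    (∀ y : Fin ℓ → ℝ, (∀ i, 0 ≤ y i) → (∑ i, y i = 1) → 0 ≤ Mstar y)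
    ∧ Mstar pi = 0
    ∧ (∀ y : Fin ℓ → ℝ, (∀ i, 0 ≤ y i) → (∑ i, y i = 1) → y ≠ pi → 0 < Mstar y) := by
  have : Nonempty (Fin ℓ) := ⟨⟨0, hℓ⟩⟩
  have hP : ∀ i j, 0 ≤ P i j := fun i j => (hPpos i j).le
  have hbdd : ∀ y : Fin ℓ → ℝ, (∀ i, 0 ≤ y i) → BddAbove (logRatioValues P y) := fun y hy =>
    bddAbove_logRatioValues hP (fun j => hPpos j j) hy
  have hM : ∀ y, Mstar y = sSup (logRatioValues P y) := hM
  have hnonneg : ∀ y : Fin ℓ → ℝ, (∀ i, 0 ≤ y i) → 0 ≤ Mstar y := fun y hy =>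
    (hM y).symm ▸ le_csSup (hbdd y hy) (zero_mem_logRatioValues hProw y)
  refine ⟨fun y hy _ => hnonneg y hy, ?_, fun y hy hysum hne => ?_⟩
  · refine le_antisymm ?_ (hnonneg pi hpiPos)
    rw [hM]
    refine csSup_le ⟨0, zero_mem_logRatioValues hProw pi⟩ ?_
    rintro _ ⟨u, hu, -, rfl⟩
    exact logRatioSum_nonpos_of_vecMul_eq_self hP hProw hpiPos hpiStat hu
  · refine (hnonneg y hy).lt_of_ne fun hzero => hne ?_
    have hmax : ∀ u : Fin ℓ → ℝ, (∀ j, 0 < u j) → logRatioSum P y u ≤ 0 := fun u hu =>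
      (logRatioSum_le_sSup (hbdd y hy) hu).trans_eq ((hM y).symm.trans hzero.symm)
    exact eq_of_vecMul_eq_self hPpos hProw (vecMul_eq_self_of_logRatioSum_nonpos hProw hmax)
      hpiStat (hysum.trans hpiSum.symm)
end
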